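/- arXiv:1310.2959 — 4 statements merged into one kernel-verified Lean document; each statement's English description precedes it below -/
import Mathlib

section
/- Fix positive integers n and w, a probability space Ω, and a random hash function h : Ω → (Fin n → Fin w) that is pairwise uniform, i.e., for all distinct i, i' ∈ Fin n, P(h(i) = h(i')) ≤ 1/w. Let y ∈ ℝ^n have nonnegative entries and fix a coordinate i. Then the expected value of the single-row sketch cell containing i satisfies E[ Σ_{i' : h(i') = h(i)} y_{i'} ] ≤ y_i + ‖y‖₁ / w, where ‖y‖₁ = Σ_{i'} y_{i'}. -/
/-!
The cell containing `i` is `∑ i', y i' · 1[h i' = h i]`, so by linearity its expectation is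
`∑ i', y i' · P(h i' = h i)`. The term `i' = i` contributes exactly `y i`, and pairwise
uniformity bounds every other collision probability by `1 / w`.
-/

open Finset MeasureTheory ProbabilityTheory

theorem integral_sum_filter_eq_sum_measureReal_mul {Ω ι : Type*} [MeasurableSpace Ω]
    [Fintype ι] {μ : Measure Ω} [IsFiniteMeasure μ] (p : ι → Ω → Prop)
    [∀ ω, DecidablePred (p · ω)] (hp : ∀ j, MeasurableSet {ω | p j ω}) (y : ι → ℝ) :
    ∫ ω, (∑ j ∈ univ.filter (p · ω), y j) ∂μ = ∑ j, μ.real {ω | p j ω} * y j := by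
  classical
  have hind : ∀ ω, ∑ j ∈ univ.filter (p · ω), y j
      = ∑ j, {ω | p j ω}.indicator (fun _ => y j) ω := fun ω => by
    simp only [sum_filter, Set.indicator_apply, Set.mem_ofPred_eq]
  simp_rw [hind]
  rw [integral_finsetSum _ fun j _ => (integrable_const (y j)).indicator (hp j)]
  simp [integral_indicator_const _ (hp _)]

theorem sum_mul_le_add_mul_sum {ι : Type*} [Fintype ι] {a y : ι → ℝ} {c : ℝ} (i : ι)
    (hy : ∀ j, 0 ≤ y j) (hai : a i ≤ 1) (ha : ∀ j, j ≠ i → a j ≤ c) (hc : 0 ≤ c) :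
    ∑ j, a j * y j ≤ y i + c * ∑ j, y j := by
  classical
  have hle : ∀ j, a j ≤ (if j = i then 1 else 0) + c := fun j => by
    rcases eq_or_ne j i with rfl | hj
    · simpa using add_le_add hai hc
    · simpa [hj] using ha j hj
  calc ∑ j, a j * y j ≤ ∑ j, ((if j = i then 1 else 0) + c) * y j :=
        sum_le_sum fun j _ => mul_le_mul_of_nonneg_right (hle j) (hy j)
    _ = y i + c * ∑ j, y j := by simp [add_mul, sum_add_distrib, mul_sum]

theorem cm_cell_expectation_le_general
    (n w : ℕ) (hw : 0 < w)
    {Ω : Type*} [MeasureSpace Ω] [IsProbabilityMeasure (ℙ : Measure Ω)]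
    (h : Ω → Fin n → Fin w) (hmeas : Measurable h)
    (hpair : ∀ i i' : Fin n, i ≠ i' → ℙ {ω | h ω i = h ω i'} ≤ 1 / w)
    (y : Fin n → ℝ) (hy : ∀ i, 0 ≤ y i) (i : Fin n) :
    ∫ ω, (∑ i' ∈ Finset.univ.filter (fun i' => h ω i' = h ω i), y i') ∂ℙ
      ≤ y i + (∑ i', y i') / w := by
  have hcoord : ∀ j, Measurable fun ω => h ω j := fun j => (measurable_pi_apply j).comp hmeas
  have hcollision : ∀ j, j ≠ i → (ℙ : Measure Ω).real {ω | h ω j = h ω i} ≤ 1 / w :=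
    fun j hj => by
      simpa [measureReal_def] using ENNReal.toReal_mono (by simp [hw.ne']) (hpair j i hj)
  calc ∫ ω, (∑ i' ∈ Finset.univ.filter (fun i' => h ω i' = h ω i), y i') ∂ℙ
      = ∑ j, (ℙ : Measure Ω).real {ω | h ω j = h ω i} * y j :=
        integral_sum_filter_eq_sum_measureReal_mul _
          (fun j => measurableSet_eq_fun (hcoord j) (hcoord i)) y
    _ ≤ y i + 1 / w * ∑ j, y j :=
        sum_mul_le_add_mul_sum i hy measureReal_le_one hcollision (by positivity)
    _ = y i + (∑ i', y i') / w := by ring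

/-- For a single row of a count-min sketch of width `w` with a pairwise uniform
random hash function `h`, the expected value of the cell containing coordinate
`i` is at most `y i + ‖y‖₁ / w`. -/
theorem cm_cell_expectation_le
    (n w : ℕ) (hn : 0 < n) (hw : 0 < w)
    {Ω : Type*} [MeasureSpace Ω] [IsProbabilityMeasure (ℙ : Measure Ω)]
    (h : Ω → Fin n → Fin w) (hmeas : Measurable h)
    (hpair : ∀ i i' : Fin n, i ≠ i' → ℙ {ω | h ω i = h ω i'} ≤ 1 / w)
    (y : Fin n → ℝ) (hy : ∀ i, 0 ≤ y i) (i : Fin n) :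
    ∫ ω, (∑ i' ∈ Finset.univ.filter (fun i' => h ω i' = h ω i), y i') ∂ℙ
      ≤ y i + (∑ i', y i') / w :=
  cm_cell_expectation_le_general n w hw h hmeas hpair y hy i
end

section
/- Fix positive integers n and w, a probability space Ω, and a random hash function h : Ω → (Fin n → Fin w) that is pairwise uniform, i.e., for all distinct i, i' ∈ Fin n, P(h(i) = h(i')) ≤ 1/w. Let y ∈ ℝ^n have nonnegative entries, fix a coordinate i, and let η > 0. Then P( Σ_{i' : h(i') = h(i)} y_{i'} > y_i + η·‖y‖₁ ) ≤ 1/(w·η). In particular, if w ≥ e/η, this failure probability is at most 1/e. -/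
/-!
The cell of `i` is `y i` plus the collision mass `X = ∑_{j ≠ i, h j = h i} y j`. Pairwise
uniformity bounds each collision probability by `1/w`, so `E X ≤ ‖y‖₁ / w` by linearity, and
Markov's inequality at level `η‖y‖₁` gives the bound `1/(wη)` (if `‖y‖₁ = 0` the event is empty).
The second claim is the case `wη ≥ e`.
-/

open Finset MeasureTheory ProbabilityTheory
open scoped ENNReal

section CollisionMass

variable {ι α M : Type*} [Fintype ι] [DecidableEq ι] [DecidableEq α] [AddCommMonoid M]

def collisionMass (g : ι → α) (i : ι) (y : ι → M) : M :=
  ∑ j ∈ univ.erase i with g j = g i, y j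

theorem sum_filter_eq_add_collisionMass (g : ι → α) (i : ι) (y : ι → M) :
    ∑ j with g j = g i, y j = y i + collisionMass g i y := by
  rw [collisionMass, filter_erase, add_sum_erase _ _ (by simp)]

theorem collisionMass_le_sum [PartialOrder M] [IsOrderedAddMonoid M] {g : ι → α} {i : ι}
    {y : ι → M} (hy : ∀ j, 0 ≤ y j) : collisionMass g i y ≤ ∑ j, y j :=
  sum_le_sum_of_subset_of_nonneg ((filter_subset _ _).trans (erase_subset _ _))
    fun j _ _ => hy j

theorem ofReal_collisionMass {g : ι → α} {i : ι} {y : ι → ℝ} (hy : ∀ j, 0 ≤ y j) :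
    ENNReal.ofReal (collisionMass g i y) = collisionMass g i fun j => ENNReal.ofReal (y j) :=
  ENNReal.ofReal_sum_of_nonneg fun j _ => hy j

theorem collisionMass_eq_sum_indicator {Ω : Type*} (h : Ω → ι → α) (i : ι) (y : ι → M)
    (ω : Ω) : collisionMass (h ω) i y =
      ∑ j ∈ univ.erase i, {ω | h ω j = h ω i}.indicator (fun _ => y j) ω := by
  simp only [collisionMass, sum_filter, Set.indicator_apply, Set.mem_ofPred_eq]

end CollisionMass

section RandomHash

variable {ι α Ω : Type*} [Fintype ι] [DecidableEq ι] [DecidableEq α] [MeasurableSpace Ω]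
  {μ : Measure Ω} {h : Ω → ι → α} {i : ι} {p : ℝ≥0∞}

theorem measurable_collisionMass (hcoll : ∀ j, MeasurableSet {ω | h ω j = h ω i})
    (y : ι → ℝ≥0∞) : Measurable fun ω => collisionMass (h ω) i y := by
  simp_rw [collisionMass_eq_sum_indicator]
  exact Finset.measurable_sum _ fun j _ => measurable_const.indicator (hcoll j)

theorem lintegral_collisionMass_le (hcoll : ∀ j, MeasurableSet {ω | h ω j = h ω i})
    (hpair : ∀ j ≠ i, μ {ω | h ω j = h ω i} ≤ p) (y : ι → ℝ≥0∞) :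
    ∫⁻ ω, collisionMass (h ω) i y ∂μ ≤ p * ∑ j, y j :=
  calc ∫⁻ ω, collisionMass (h ω) i y ∂μ
      = ∑ j ∈ univ.erase i, y j * μ {ω | h ω j = h ω i} := by
        simp_rw [collisionMass_eq_sum_indicator]
        rw [lintegral_finsetSum _ fun j _ => measurable_const.indicator (hcoll j)]
        simp_rw [lintegral_indicator_const (hcoll _)]
    _ ≤ ∑ j ∈ univ.erase i, y j * p :=
        sum_le_sum fun j hj => mul_le_mul_right (hpair j (ne_of_mem_erase hj)) _
    _ ≤ p * ∑ j, y j := by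
        rw [← sum_mul, mul_comm]
        exact mul_le_mul_right (sum_le_sum_of_subset (erase_subset _ _)) _

theorem measure_mul_sum_lt_collisionMass_le (hcoll : ∀ j, MeasurableSet {ω | h ω j = h ω i})
    (hpair : ∀ j ≠ i, μ {ω | h ω j = h ω i} ≤ p) {y : ι → ℝ} (hy : ∀ j, 0 ≤ y j) {η : ℝ}
    (hη : 0 < η) :
    μ {ω | η * ∑ j, y j < collisionMass (h ω) i y} ≤ p / ENNReal.ofReal η := by
  rcases (sum_nonneg fun j _ => hy j : 0 ≤ ∑ j, y j).eq_or_lt with hS | hS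
  · have hempty : {ω | η * ∑ j, y j < collisionMass (h ω) i y} = ∅ :=
      Set.eq_empty_of_forall_notMem fun ω (hω : η * ∑ j, y j < _) => by
        rw [← hS, mul_zero] at hω
        linarith [collisionMass_le_sum (g := h ω) (i := i) hy]
    rw [hempty, measure_empty]
    exact zero_le
  set S := ∑ j, y j with hS_def
  set ε := ENNReal.ofReal (η * S)
  have hε : ε ≠ 0 := (ENNReal.ofReal_pos.2 (mul_pos hη hS)).ne'
  let Y j := ENNReal.ofReal (y j)
  calc μ {ω | η * S < collisionMass (h ω) i y}
      ≤ μ {ω | ε ≤ collisionMass (h ω) i Y} :=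
        measure_mono fun ω hω => by
          rw [Set.mem_ofPred_eq, ← ofReal_collisionMass hy]
          exact ENNReal.ofReal_le_ofReal hω.le
    _ ≤ (∫⁻ ω, collisionMass (h ω) i Y ∂μ) / ε :=
        meas_ge_le_lintegral_div (measurable_collisionMass hcoll Y).aemeasurable hε
          ENNReal.ofReal_ne_top
    _ ≤ p * ENNReal.ofReal S / (ENNReal.ofReal η * ENNReal.ofReal S) := by
        rw [← ENNReal.ofReal_mul hη.le, hS_def, ENNReal.ofReal_sum_of_nonneg fun j _ => hy j]
        gcongr
        exact lintegral_collisionMass_le hcoll hpair Y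
    _ = p / ENNReal.ofReal η :=
        ENNReal.mul_div_mul_right _ _ (ENNReal.ofReal_pos.2 hS).ne' ENNReal.ofReal_ne_top

end RandomHash

theorem cm_cell_tail_bound_general
    (n w : ℕ) (hw : 0 < w)
    {Ω : Type*} [MeasureSpace Ω] [IsProbabilityMeasure (ℙ : Measure Ω)]
    (h : Ω → Fin n → Fin w) (hmeas : Measurable h)
    (hpair : ∀ i i' : Fin n, i ≠ i' → ℙ {ω | h ω i = h ω i'} ≤ 1 / w)
    (y : Fin n → ℝ) (hy : ∀ i, 0 ≤ y i) (i : Fin n) (η : ℝ) (hη : 0 < η) :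
    ℙ {ω | (∑ i' ∈ Finset.univ.filter (fun i' => h ω i' = h ω i), y i')
            > y i + η * ∑ i', y i'}
        ≤ ENNReal.ofReal (1 / (w * η)) ∧
    (Real.exp 1 / η ≤ w →
      ℙ {ω | (∑ i' ∈ Finset.univ.filter (fun i' => h ω i' = h ω i), y i')
              > y i + η * ∑ i', y i'}
          ≤ ENNReal.ofReal (1 / Real.exp 1)) := by
  have hcoll (j : Fin n) : MeasurableSet {ω | h ω j = h ω i} :=
    measurableSet_eq_fun ((measurable_pi_apply j).comp hmeas) ((measurable_pi_apply i).comp hmeas)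
  have tail : ℙ {ω | (∑ i' ∈ Finset.univ.filter (fun i' => h ω i' = h ω i), y i')
      > y i + η * ∑ i', y i'} ≤ ENNReal.ofReal (1 / (w * η)) := calc
    _ ≤ ℙ {ω | η * ∑ j, y j < collisionMass (h ω) i y} := measure_mono fun ω hω => by
        simp only [Set.mem_ofPred_eq, gt_iff_lt, sum_filter_eq_add_collisionMass] at hω ⊢
        linarith
    _ ≤ 1 / w / ENNReal.ofReal η :=
        measure_mul_sum_lt_collisionMass_le hcoll (fun j hj => hpair j i hj) hy hη
    _ = ENNReal.ofReal (1 / (w * η)) := by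
        rw [← div_div, ENNReal.ofReal_div_of_pos hη, ENNReal.ofReal_div_of_pos (by positivity),
          ENNReal.ofReal_one, ENNReal.ofReal_natCast]
  refine ⟨tail, fun hwη => tail.trans (ENNReal.ofReal_le_ofReal ?_)⟩
  exact one_div_le_one_div_of_le (Real.exp_pos 1) ((div_le_iff₀ hη).1 hwη)

/-- Markov-type bound for a single row of a count-min sketch: for a pairwise
uniform random hash `h` and nonnegative `y`, the cell containing coordinate `i`
exceeds `y i + η‖y‖₁` with probability at most `1/(wη)`; in particular at most
`1/e` whenever `w ≥ e/η`. -/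
theorem cm_cell_tail_bound
    (n w : ℕ) (hn : 0 < n) (hw : 0 < w)
    {Ω : Type*} [MeasureSpace Ω] [IsProbabilityMeasure (ℙ : Measure Ω)]
    (h : Ω → Fin n → Fin w) (hmeas : Measurable h)
    (hpair : ∀ i i' : Fin n, i ≠ i' → ℙ {ω | h ω i = h ω i'} ≤ 1 / w)
    (y : Fin n → ℝ) (hy : ∀ i, 0 ≤ y i) (i : Fin n) (η : ℝ) (hη : 0 < η) :
    ℙ {ω | (∑ i' ∈ Finset.univ.filter (fun i' => h ω i' = h ω i), y i')
            > y i + η * ∑ i', y i'}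
        ≤ ENNReal.ofReal (1 / (w * η)) ∧
    (Real.exp 1 / η ≤ w →
      ℙ {ω | (∑ i' ∈ Finset.univ.filter (fun i' => h ω i' = h ω i), y i')
              > y i + η * ∑ i', y i'}
          ≤ ENNReal.ofReal (1 / Real.exp 1)) :=
  cm_cell_tail_bound_general n w hw h hmeas hpair y hy i η hη
end

section
/- (k-sparsity is preserved by the MAD iteration.) Let V be a finite vertex set and m a positive integer. Let W' : V × V → ℝ be edge weights with nonnegative entries and W'_{vv} = 0 for all v; let S : V → {0,1} be the seed indicator; let Q, R : V → ℝ^m have nonnegative entries; and let μ₁, μ₂, μ₃ > 0. For each v set M_v = μ₁ S_v + μ₂ Σ_{u ≠ v} (W'_{uv} + W'_{vu}) + μ₃, and define the MAD iteration Y^{(t+1)}_v = (1/M_v) ( μ₁ S_v Q_v + μ₂ Σ_{u ∈ V} (W'_{uv} + W'_{vu}) Y^{(t)}_u + μ₃ R_v ), with Y^{(0)} = Q. If, for some k ≥ 0, ‖Q_v‖₁ ≤ k and ‖R_v‖₁ ≤ k for every v ∈ V, then for every iteration t ≥ 0 and every v ∈ V, the row Y^{(t)}_v has nonnegative entries and ‖Y^{(t)}_v‖₁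 ≤ k. -/
open Finset

/-- k-sparsity is preserved by the MAD iteration: if every row of `Q` and `R`
has ℓ₁-norm at most `k`, then every row of every MAD iterate `Y^{(t)}` is
nonnegative with ℓ₁-norm at most `k`. -/
theorem mad_iteration_preserves_sparsity
    (V : Type*) [Fintype V] [DecidableEq V] (m : ℕ) (hm : 0 < m)
    (W' : V → V → ℝ) (hW : ∀ u v, 0 ≤ W' u v) (hWdiag : ∀ v, W' v v = 0)
    (S : V → ℝ) (hS : ∀ v, S v = 0 ∨ S v = 1)
    (Q R : V → Fin m → ℝ) (hQ : ∀ v ℓ, 0 ≤ Q v ℓ) (hR : ∀ v ℓ, 0 ≤ R v ℓ)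
    (μ₁ μ₂ μ₃ : ℝ) (hμ₁ : 0 < μ₁) (hμ₂ : 0 < μ₂) (hμ₃ : 0 < μ₃)
    (M : V → ℝ)
    (hM : ∀ v, M v = μ₁ * S v
        + μ₂ * ∑ u ∈ Finset.univ.filter (fun u => u ≠ v), (W' u v + W' v u)
        + μ₃)
    (Y : ℕ → V → Fin m → ℝ)
    (hY0 : Y 0 = Q)
    (hYsucc : ∀ t v ℓ, Y (t + 1) v ℓ =
        (1 / M v) * (μ₁ * S v * Q v ℓ
          + μ₂ * ∑ u, (W' u v + W' v u) * Y t u ℓ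
          + μ₃ * R v ℓ))
    (k : ℝ) (hk : 0 ≤ k)
    (hQk : ∀ v, (∑ ℓ, |Q v ℓ|) ≤ k) (hRk : ∀ v, (∑ ℓ, |R v ℓ|) ≤ k) :
    ∀ (t : ℕ) (v : V), (∀ ℓ, 0 ≤ Y t v ℓ) ∧ (∑ ℓ, |Y t v ℓ|) ≤ k := by

  have hSnn : ∀ v, 0 ≤ S v := by
    intro v; rcases hS v with h | h <;> rw [h] <;> norm_num
  have hMpos : ∀ v, 0 < M v := by
    intro v
    rw [hM v]
    have h1 : 0 ≤ μ₁ * S v := mul_nonneg hμ₁.le (hSnn v)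
    have h2 : 0 ≤ μ₂ * ∑ u ∈ Finset.univ.filter (fun u => u ≠ v), (W' u v + W' v u) :=
      mul_nonneg hμ₂.le (Finset.sum_nonneg fun u _ => add_nonneg (hW u v) (hW v u))
    linarith
  intro t
  induction t with
  | zero => intro v; rw [hY0]; exact ⟨hQ v, hQk v⟩
  | succ t ih =>
    intro v
    have hnn : ∀ ℓ, 0 ≤ Y (t + 1) v ℓ := by
      intro ℓ
      rw [hYsucc]
      apply mul_nonneg
      · exact le_of_lt (by have := hMpos v; positivity)
      · have h2 : 0 ≤ ∑ u, (W' u v + W' v u) * Y t u ℓ :=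
          Finset.sum_nonneg fun u _ =>
            mul_nonneg (add_nonneg (hW u v) (hW v u)) ((ih u).1 ℓ)
        have h1 := mul_nonneg (mul_nonneg hμ₁.le (hSnn v)) (hQ v ℓ)
        have h3 := mul_nonneg hμ₃.le (hR v ℓ)
        nlinarith
    refine ⟨hnn, ?_⟩
    have habs : (∑ ℓ, |Y (t + 1) v ℓ|) = ∑ ℓ, Y (t + 1) v ℓ :=
      Finset.sum_congr rfl fun ℓ _ => abs_of_nonneg (hnn ℓ)
    rw [habs]
    have hsum : ∑ ℓ, Y (t + 1) v ℓ =
        (1 / M v) * (μ₁ * S v * (∑ ℓ, Q v ℓ)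
          + μ₂ * ∑ u, (W' u v + W' v u) * (∑ ℓ, Y t u ℓ)
          + μ₃ * (∑ ℓ, R v ℓ)) := by
      simp only [hYsucc]
      rw [← Finset.mul_sum]
      congr 1
      rw [Finset.sum_add_distrib, Finset.sum_add_distrib, ← Finset.mul_sum, ← Finset.mul_sum,
        ← Finset.mul_sum]
      congr 1
      congr 1
      rw [Finset.sum_comm]
      congr 1
      exact Finset.sum_congr rfl fun u _ => by rw [Finset.mul_sum]
    rw [hsum]
    have hQs : (∑ ℓ, Q v ℓ) ≤ k := by
      calc (∑ ℓ, Q v ℓ) = ∑ ℓ, |Q v ℓ| :=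
            Finset.sum_congr rfl fun ℓ _ => (abs_of_nonneg (hQ v ℓ)).symm
        _ ≤ k := hQk v
    have hRs : (∑ ℓ, R v ℓ) ≤ k := by
      calc (∑ ℓ, R v ℓ) = ∑ ℓ, |R v ℓ| :=
            Finset.sum_congr rfl fun ℓ _ => (abs_of_nonneg (hR v ℓ)).symm
        _ ≤ k := hRk v
    have hYs : ∀ u, (∑ ℓ, Y t u ℓ) ≤ k := by
      intro u
      calc (∑ ℓ, Y t u ℓ) = ∑ ℓ, |Y t u ℓ| :=
            Finset.sum_congr rfl fun ℓ _ => (abs_of_nonneg ((ih u).1 ℓ)).symm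
        _ ≤ k := (ih u).2
    have hWsum : (∑ u, (W' u v + W' v u) * (∑ ℓ, Y t u ℓ))
        ≤ (∑ u ∈ Finset.univ.filter (fun u => u ≠ v), (W' u v + W' v u)) * k := by
      rw [Finset.sum_mul]
      rw [← Finset.sum_filter_add_sum_filter_not Finset.univ (fun u => u ≠ v)
        (fun u => (W' u v + W' v u) * (∑ ℓ, Y t u ℓ))]
      have hdiag : (∑ u ∈ Finset.univ.filter (fun u => ¬ u ≠ v),
          (W' u v + W' v u) * (∑ ℓ, Y t u ℓ)) = 0 := by
        apply Finset.sum_eq_zero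
        intro u hu
        simp only [Finset.mem_filter, not_not] at hu
        rw [hu.2, hWdiag v]
        ring
      rw [hdiag, add_zero]
      apply Finset.sum_le_sum
      intro u _
      have hw : 0 ≤ W' u v + W' v u := add_nonneg (hW u v) (hW v u)
      exact mul_le_mul_of_nonneg_left (hYs u) hw
    have hMv := hMpos v
    rw [div_mul_eq_mul_div, one_mul, div_le_iff₀ hMv, hM v]
    have h1 : μ₁ * S v * (∑ ℓ, Q v ℓ) ≤ μ₁ * S v * k :=
      mul_le_mul_of_nonneg_left hQs (mul_nonneg hμ₁.le (hSnn v))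
    have h2 : μ₂ * (∑ u, (W' u v + W' v u) * (∑ ℓ, Y t u ℓ))
        ≤ μ₂ * ((∑ u ∈ Finset.univ.filter (fun u => u ≠ v), (W' u v + W' v u)) * k) :=
      mul_le_mul_of_nonneg_left hWsum hμ₂.le
    have h3 : μ₃ * (∑ ℓ, R v ℓ) ≤ μ₃ * k := mul_le_mul_of_nonneg_left hRs hμ₃.le
    nlinarith [h1, h2, h3]
end

section
/- Fix positive integers n and w, a probability space Ω, and a random hash function h : Ω → (Fin n → Fin w) that is pairwise uniform, i.e., for all distinct i, i' ∈ Fin n, P(h(i) = h(i')) ≤ 1/w. Let y ∈ ℝ^n have nonnegative entries, fix a coordinate i and a set T ⊆ Fin n, and let t = Σ_{i' ∉ T} y_{i'} be the weight of the tail outside T. Then the expected tail contribution to i's sketch cell satisfies E[ Σ_{i' ∉ T ∪ {i}, h(i') = h(i)} y_{i'} ] ≤ t/w, and hence for every η > 0, P( Σ_{i' ∉ T ∪ {i}, h(i') = h(i)} y_{i'} > η·t ) ≤ 1/(w·η); in particular this probability is at most 1/e if w ≥ e/η. -/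
/-!
Each coordinate `i' ∉ T ∪ {i}` contributes `y i'` exactly on the event that it collides with `i`,
which has probability at most `1/w`, so linearity of expectation bounds the expected contribution
by `t/w`. Markov's inequality at level `η t` turns this into the tail bound; when `t = 0` the
contribution is a nonnegative variable with expectation `0`, hence vanishes almost surely.
-/
open Finset MeasureTheory ProbabilityTheory
open scoped ENNReal

section
variable {Ω ι : Type*} [MeasurableSpace Ω] {μ : Measure Ω} [IsFiniteMeasure μ]

theorem integral_sum_indicator_const_le {A : ι → Set Ω} (hA : ∀ i, MeasurableSet (A i))
    {s : Finset ι} {y : ι → ℝ} (hy : ∀ i ∈ s, 0 ≤ y i) {p : ℝ} (hp : ∀ i ∈ s, μ.real (A i) ≤ p) :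
    ∫ ω, ∑ i ∈ s, (A i).indicator (fun _ => y i) ω ∂μ ≤ p * ∑ i ∈ s, y i := by
  rw [integral_finsetSum _ fun i _ => (integrable_const (y i)).indicator (hA i), mul_sum]
  refine sum_le_sum fun i hi => ?_
  rw [integral_indicator_const _ (hA i), smul_eq_mul]
  exact mul_le_mul_of_nonneg_right (hp i hi) (hy i hi)

theorem measure_mul_lt_le_of_integral_le {X : Ω → ℝ} (hX : 0 ≤ X) (hXi : Integrable X μ)
    {q t η : ℝ} (ht : 0 ≤ t) (hη : 0 < η) (hint : ∫ ω, X ω ∂μ ≤ q * t) :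
    μ {ω | η * t < X ω} ≤ ENNReal.ofReal (q / η) := by
  rcases ht.eq_or_lt with rfl | ht
  · have hX0 : X =ᵐ[μ] 0 := (integral_eq_zero_iff_of_nonneg hX hXi).1
      (le_antisymm (by simpa using hint) (integral_nonneg hX))
    have hnull : μ {ω | η * 0 < X ω} = 0 :=
      measure_mono_null (fun ω hω => (mul_zero η ▸ hω : 0 < X ω).ne') (ae_iff.1 hX0)
    exact hnull ▸ bot_le
  · have markov := mul_meas_ge_le_integral_of_nonneg (.of_forall hX) hXi (η * t) (μ := μ)
    have hreal : μ.real {ω | η * t ≤ X ω} ≤ q / η := by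
      rw [le_div_iff₀ hη]
      exact le_of_mul_le_mul_right (by linarith) ht
    calc μ {ω | η * t < X ω} ≤ μ {ω | η * t ≤ X ω} :=
          measure_mono (Set.ofPred_subset_ofPred.2 fun _ => le_of_lt)
      _ = ENNReal.ofReal (μ.real {ω | η * t ≤ X ω}) := (ofReal_measureReal).symm
      _ ≤ ENNReal.ofReal (q / η) := ENNReal.ofReal_le_ofReal hreal
end

theorem cm_tail_contribution_bound_general
    (n w : ℕ) (hw : 0 < w)
    {Ω : Type*} [MeasureSpace Ω] [IsProbabilityMeasure (ℙ : Measure Ω)]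
    (h : Ω → Fin n → Fin w) (hmeas : Measurable h)
    (hpair : ∀ i i' : Fin n, i ≠ i' → ℙ {ω | h ω i = h ω i'} ≤ 1 / w)
    (y : Fin n → ℝ) (hy : ∀ i, 0 ≤ y i) (i : Fin n) (T : Finset (Fin n)) :
    (∫ ω, (∑ i' ∈ Finset.univ.filter
            (fun i' => i' ∉ T ∧ i' ≠ i ∧ h ω i' = h ω i), y i') ∂ℙ)
        ≤ (∑ i' ∈ Finset.univ.filter (fun i' => i' ∉ T), y i') / w ∧
    ∀ η : ℝ, 0 < η →
      ℙ {ω | (∑ i' ∈ Finset.univ.filter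
                (fun i' => i' ∉ T ∧ i' ≠ i ∧ h ω i' = h ω i), y i')
              > η * ∑ i' ∈ Finset.univ.filter (fun i' => i' ∉ T), y i'}
          ≤ ENNReal.ofReal (1 / (w * η)) ∧
      (Real.exp 1 / η ≤ w →
        ℙ {ω | (∑ i' ∈ Finset.univ.filter
                  (fun i' => i' ∉ T ∧ i' ≠ i ∧ h ω i' = h ω i), y i')
                > η * ∑ i' ∈ Finset.univ.filter (fun i' => i' ∉ T), y i'}
            ≤ ENNReal.ofReal (1 / Real.exp 1)) := by
  set S := univ.filter fun i' => i' ∉ T ∧ i' ≠ i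
  set collide : Fin n → Set Ω := fun i' => {ω | h ω i' = h ω i}
  set t := ∑ i' ∈ univ.filter (fun i' => i' ∉ T), y i'
  have hcollide : ∀ i', MeasurableSet (collide i') := fun i' =>
    measurableSet_eq_fun ((measurable_pi_apply i').comp hmeas) ((measurable_pi_apply i).comp hmeas)
  have hX : ∀ ω, ∑ i' ∈ univ.filter (fun i' => i' ∉ T ∧ i' ≠ i ∧ h ω i' = h ω i), y i'
      = ∑ i' ∈ S, (collide i').indicator (fun _ => y i') ω := fun ω => by
    simp only [S, collide, sum_filter, Set.indicator_apply, Set.mem_ofPred_eq, ite_and]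
  have hprob : ∀ i' ∈ S, (ℙ : Measure Ω).real (collide i') ≤ (w : ℝ)⁻¹ := fun i' hi' => by
    have hle := ENNReal.toReal_mono (by simp [hw.ne']) (hpair i' i (mem_filter.1 hi').2.2)
    simpa [measureReal_def] using hle
  have hexp : ∫ ω, ∑ i' ∈ S, (collide i').indicator (fun _ => y i') ω ∂ℙ ≤ t / w :=
    calc _ ≤ (w : ℝ)⁻¹ * ∑ i' ∈ S, y i' :=
          integral_sum_indicator_const_le hcollide (fun i' _ => hy i') hprob
      _ ≤ (w : ℝ)⁻¹ * t := by
          gcongr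
          exact sum_le_sum_of_subset_of_nonneg (monotone_filter_right _ fun _ _ => And.left)
            fun j _ _ => hy j
      _ = t / w := (div_eq_inv_mul _ _).symm
  have htail : ∀ η > 0, ℙ {ω | η * t < ∑ i' ∈ S, (collide i').indicator (fun _ => y i') ω}
      ≤ ENNReal.ofReal (1 / (w * η)) := fun η hη => by
    rw [one_div, mul_inv, ← div_eq_mul_inv]
    refine measure_mul_lt_le_of_integral_le (fun ω => sum_nonneg fun i' _ => ?_)
      (integrable_finsetSum _ fun i' _ => (integrable_const _).indicator (hcollide i'))
      (sum_nonneg fun i' _ => hy i') hη (by rwa [← div_eq_inv_mul])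
    exact Set.indicator_nonneg (fun _ _ => hy i') ω
  simp only [hX, gt_iff_lt]
  refine ⟨hexp, fun η hη => ⟨htail η hη, fun hwη => (htail η hη).trans ?_⟩⟩
  gcongr
  rwa [div_le_iff₀ hη] at hwη

/-- Tail-contribution bound for one row of a count-min sketch: for a pairwise
uniform random hash `h`, nonnegative `y`, a coordinate `i`, and a set `T`,
with tail weight `t = ∑_{i' ∉ T} y i'`, the expected contribution to `i`'s
cell from coordinates outside `T ∪ {i}` is at most `t/w`; hence for every
`η > 0`, this contribution exceeds `η t` with probability at most `1/(wη)`,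
and in particular at most `1/e` whenever `w ≥ e/η`. -/
theorem cm_tail_contribution_bound
    (n w : ℕ) (hn : 0 < n) (hw : 0 < w)
    {Ω : Type*} [MeasureSpace Ω] [IsProbabilityMeasure (ℙ : Measure Ω)]
    (h : Ω → Fin n → Fin w) (hmeas : Measurable h)
    (hpair : ∀ i i' : Fin n, i ≠ i' → ℙ {ω | h ω i = h ω i'} ≤ 1 / w)
    (y : Fin n → ℝ) (hy : ∀ i, 0 ≤ y i) (i : Fin n) (T : Finset (Fin n)) :
    (∫ ω, (∑ i' ∈ Finset.univ.filter
            (fun i' => i' ∉ T ∧ i' ≠ i ∧ h ω i' = h ω i), y i') ∂ℙ)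
        ≤ (∑ i' ∈ Finset.univ.filter (fun i' => i' ∉ T), y i') / w ∧
    ∀ η : ℝ, 0 < η →
      ℙ {ω | (∑ i' ∈ Finset.univ.filter
                (fun i' => i' ∉ T ∧ i' ≠ i ∧ h ω i' = h ω i), y i')
              > η * ∑ i' ∈ Finset.univ.filter (fun i' => i' ∉ T), y i'}
          ≤ ENNReal.ofReal (1 / (w * η)) ∧
      (Real.exp 1 / η ≤ w →
        ℙ {ω | (∑ i' ∈ Finset.univ.filter
                  (fun i' => i' ∉ T ∧ i' ≠ i ∧ h ω i' = h ω i), y i')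
                > η * ∑ i' ∈ Finset.univ.filter (fun i' => i' ∉ T), y i'}
            ≤ ENNReal.ofReal (1 / Real.exp 1)) :=
  cm_tail_contribution_bound_general n w hw h hmeas hpair y hy i T
end
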